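/- arXiv:2201.07974 — 3 statements merged into one kernel-verified Lean document; each statement's English description precedes it below -/
import Mathlib

section
/- Let n ≥ 3. For every regular n-gon with center c, circumradius R > 0 and orientation θ, and every point M in its plane with L = |M − c|, one has max(R², L²) = (1/2)·(S_n^{(2)} + √(3·(S_n^{(2)})² − 2·S_n^{(4)})) and min(R², L²) = (1/2)·(S_n^{(2)} − √(3·(S_n^{(2)})² − 2·S_n^{(4)})); thus the n distances d_0,…,d_{n−1} determine the unordered pair {R², L²}. -/
open Complex Real Finset ComplexConjugate

/-!
Write the vertices as `c + s ζ ^ k` with `ζ = exp (2πi/n)` and `‖s‖ = R`. Then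
`d_k² = L² + R² - 2 Re (u ζ^k)` with `‖u‖ = L R`, and since `ζ ≠ 1` and, as `n ≥ 3`, `ζ² ≠ 1`,
the geometric sums of `ζ` and `ζ²` vanish. Hence `S₂ = R² + L²` and
`S₄ = (R² + L²)² + 2 R² L²`, so `3 S₂² - 2 S₄ = (R² - L²)²`.
-/

lemma geom_sum_eq_zero_of_pow_eq_one {K : Type*} [DivisionRing K] {x : K} {n : ℕ} (hx : x ≠ 1) (hxn : x ^ n = 1) :
    ∑ k ∈ range n, x ^ k = 0 := by
  simp [geom_sum_eq hx, hxn]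

lemma sum_re_mul_pow_eq_zero {ζ : ℂ} {n : ℕ} (hζ : ζ ≠ 1) (hζn : ζ ^ n = 1) (u : ℂ) :
    ∑ k ∈ range n, (u * ζ ^ k).re = 0 := by
  rw [← re_sum, ← mul_sum, geom_sum_eq_zero_of_pow_eq_one hζ hζn, mul_zero, zero_re]

lemma re_sq_eq_half_sq_norm_add_re_sq (z : ℂ) : z.re ^ 2 = (‖z‖ ^ 2 + (z ^ 2).re) / 2 := by
  rw [Complex.sq_norm, normSq_apply, sq z, mul_re]; ring

lemma sum_re_mul_pow_sq {ζ : ℂ} {n : ℕ} (hζ2 : ζ ^ 2 ≠ 1) (hζn : ζ ^ n = 1) (u : ℂ) :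
    ∑ k ∈ range n, (u * ζ ^ k).re ^ 2 = n * ‖u‖ ^ 2 / 2 := by
  rcases eq_or_ne n 0 with rfl | hn
  · simp
  have hnorm : ‖ζ‖ = 1 := norm_eq_one_of_pow_eq_one hζn hn
  have hζ2n : (ζ ^ 2) ^ n = 1 := by rw [← pow_mul, mul_comm, pow_mul, hζn, one_pow]
  have hsq (k : ℕ) : (u * ζ ^ k) ^ 2 = u ^ 2 * (ζ ^ 2) ^ k := by ring
  simp only [re_sq_eq_half_sq_norm_add_re_sq, hsq, norm_mul, norm_pow, hnorm, one_pow, mul_one]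
  rw [← sum_div, sum_add_distrib, sum_re_mul_pow_eq_zero hζ2 hζ2n, sum_const, card_range,
    nsmul_eq_mul]
  ring

lemma norm_sub_sq_eq_sub_re_conj_mul (w v : ℂ) :
    ‖w - v‖ ^ 2 = ‖w‖ ^ 2 + ‖v‖ ^ 2 - 2 * (conj w * v).re := by
  simp only [Complex.sq_norm, normSq_sub]
  rw [← conj_re, map_mul, conj_conj, mul_comm]

lemma sum_norm_sub_mul_pow_sq {ζ : ℂ} {n : ℕ} (hζ : ζ ≠ 1) (hζn : ζ ^ n = 1) (w s : ℂ) :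
    ∑ k ∈ range n, ‖w - s * ζ ^ k‖ ^ 2 = n * (‖w‖ ^ 2 + ‖s‖ ^ 2) := by
  rcases eq_or_ne n 0 with rfl | hn
  · simp
  have hnorm : ‖ζ‖ = 1 := norm_eq_one_of_pow_eq_one hζn hn
  have hk (k : ℕ) :
      ‖w - s * ζ ^ k‖ ^ 2 = (‖w‖ ^ 2 + ‖s‖ ^ 2) - 2 * (conj w * s * ζ ^ k).re := by
    rw [norm_sub_sq_eq_sub_re_conj_mul, norm_mul, norm_pow, hnorm, one_pow, mul_one, mul_assoc]
  simp only [hk]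
  rw [sum_sub_distrib, ← mul_sum, sum_re_mul_pow_eq_zero hζ hζn, sum_const, card_range,
    nsmul_eq_mul]
  ring

lemma sum_norm_sub_mul_pow_pow_four {ζ : ℂ} {n : ℕ} (hζ2 : ζ ^ 2 ≠ 1) (hζn : ζ ^ n = 1)
    (w s : ℂ) :
    ∑ k ∈ range n, ‖w - s * ζ ^ k‖ ^ 4
      = n * ((‖w‖ ^ 2 + ‖s‖ ^ 2) ^ 2 + 2 * ‖w‖ ^ 2 * ‖s‖ ^ 2) := by
  rcases eq_or_ne n 0 with rfl | hn
  · simp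
  have hζ : ζ ≠ 1 := fun h => hζ2 (by rw [h, one_pow])
  have hnorm : ‖ζ‖ = 1 := norm_eq_one_of_pow_eq_one hζn hn
  set A := ‖w‖ ^ 2 + ‖s‖ ^ 2
  set u := conj w * s
  have hk (k : ℕ) : ‖w - s * ζ ^ k‖ ^ 4
      = A ^ 2 - 4 * A * (u * ζ ^ k).re + 4 * (u * ζ ^ k).re ^ 2 := by
    rw [show 4 = 2 * 2 from rfl, pow_mul, norm_sub_sq_eq_sub_re_conj_mul, norm_mul, norm_pow,
      hnorm, one_pow, mul_one, ← mul_assoc]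
    ring
  have hu : ‖u‖ = ‖w‖ * ‖s‖ := by rw [norm_mul, Complex.norm_conj]
  simp only [hk]
  rw [sum_add_distrib, sum_sub_distrib, ← mul_sum, ← mul_sum, sum_re_mul_pow_eq_zero hζ hζn,
    sum_re_mul_pow_sq hζ2 hζn, hu, sum_const, card_range, nsmul_eq_mul]
  ring

lemma sqrt_three_mul_sq_sub_two_mul (a b : ℝ) :
    √(3 * (a + b) ^ 2 - 2 * ((a + b) ^ 2 + 2 * a * b)) = |a - b| := by
  rw [← Real.sqrt_sq_eq_abs]; ring_nf

lemma max_eq_half_add_sqrt_and_min_eq_half_sub_sqrt (a b : ℝ) :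
    max a b = 1 / 2 * ((a + b) + √(3 * (a + b) ^ 2 - 2 * ((a + b) ^ 2 + 2 * a * b))) ∧
      min a b = 1 / 2 * ((a + b) - √(3 * (a + b) ^ 2 - 2 * ((a + b) ^ 2 + 2 * a * b))) := by
  rw [sqrt_three_mul_sq_sub_two_mul]
  constructor <;> linarith [max_sub_min_eq_abs' a b, min_add_max a b]

lemma exp_I_mul_two_pi_mul_div_add (n k : ℕ) (θ : ℝ) :
    exp (I * ((2 * π * k / n + θ : ℝ) : ℂ)) = exp (I * θ) * exp (2 * π * I / n) ^ k := by
  rw [← Complex.exp_nat_mul, ← Complex.exp_add]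
  push_cast
  ring_nf

theorem max_min_R_sq_L_sq_general (n : ℕ) (hn : 3 ≤ n)
    (c M : ℂ) (R θ : ℝ) (L : ℝ) (hL : L = ‖M - c‖)
    (S2 S4 : ℝ)
    (hS2 : S2 = (1 / n : ℝ) * ∑ k ∈ Finset.range n,
        (‖M - (c + R * Complex.exp (Complex.I * ((2 * π * k / n + θ : ℝ) : ℂ)))‖) ^ 2)
    (hS4 : S4 = (1 / n : ℝ) * ∑ k ∈ Finset.range n,
        (‖M - (c + R * Complex.exp (Complex.I * ((2 * π * k / n + θ : ℝ) : ℂ)))‖) ^ 4) :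
    max (R ^ 2) (L ^ 2) = (1 / 2) * (S2 + Real.sqrt (3 * S2 ^ 2 - 2 * S4))
      ∧ min (R ^ 2) (L ^ 2) = (1 / 2) * (S2 - Real.sqrt (3 * S2 ^ 2 - 2 * S4)) := by
  set ζ := exp (2 * π * I / n)
  set s := (R : ℂ) * exp (I * θ)
  have hζ : IsPrimitiveRoot ζ n := isPrimitiveRoot_exp n (by omega)
  have hζ2 : ζ ^ 2 ≠ 1 := hζ.pow_ne_one_of_pos_of_lt two_ne_zero (by omega)
  have hvertex (k : ℕ) :
      M - (c + R * exp (I * ((2 * π * k / n + θ : ℝ) : ℂ))) = (M - c) - s * ζ ^ k := by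
    rw [exp_I_mul_two_pi_mul_div_add]; ring
  have hs : ‖s‖ ^ 2 = R ^ 2 := by simp [s, norm_exp]
  have hn0 : (n : ℝ) ≠ 0 := by positivity
  have hS2' : S2 = R ^ 2 + L ^ 2 := by
    simp only [hS2, hvertex]
    rw [sum_norm_sub_mul_pow_sq (hζ.ne_one (by omega)) hζ.pow_eq_one, hs, hL]
    field_simp; ring
  have hS4' : S4 = (R ^ 2 + L ^ 2) ^ 2 + 2 * R ^ 2 * L ^ 2 := by
    simp only [hS4, hvertex]
    rw [sum_norm_sub_mul_pow_pow_four hζ2 hζ.pow_eq_one, hs, hL]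
    field_simp; ring
  rw [hS2', hS4']
  exact max_eq_half_add_sqrt_and_min_eq_half_sub_sqrt _ _

theorem max_min_R_sq_L_sq (n : ℕ) (hn : 3 ≤ n)
    (c M : ℂ) (R θ : ℝ) (hR : 0 < R) (L : ℝ) (hL : L = ‖M - c‖)
    (S2 S4 : ℝ)
    (hS2 : S2 = (1 / n : ℝ) * ∑ k ∈ Finset.range n,
        (‖M - (c + R * Complex.exp (Complex.I * ((2 * π * k / n + θ : ℝ) : ℂ)))‖) ^ 2)
    (hS4 : S4 = (1 / n : ℝ) * ∑ k ∈ Finset.range n,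
        (‖M - (c + R * Complex.exp (Complex.I * ((2 * π * k / n + θ : ℝ) : ℂ)))‖) ^ 4) :
    max (R ^ 2) (L ^ 2) = (1 / 2) * (S2 + Real.sqrt (3 * S2 ^ 2 - 2 * S4))
      ∧ min (R ^ 2) (L ^ 2) = (1 / 2) * (S2 - Real.sqrt (3 * S2 ^ 2 - 2 * S4)) :=
  max_min_R_sq_L_sq_general n hn c M R θ L hL S2 S4 hS2 hS4
end

section
/- Let n ≥ 2 and 1 ≤ m ≤ n−1, and let R, L ≥ 0. For any centers c, c' ∈ ℂ, orientations θ, θ' ∈ ℝ, and points M, M' ∈ ℂ with |M − c| = L and |M' − c'| = R, one has ∑_{k=0}^{n−1} |M − (c + R·exp(I·(2πk/n + θ)))|^{2m} = ∑_{k=0}^{n−1} |M' − (c' + L·exp(I·(2πk/n + θ')))|^{2m}; that is, the power sums of the squared distances up to exponent n−1 are unchanged when the circumradius R and the point-to-center distance L are interchanged. -/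
open Complex Real Finset
open scoped ComplexConjugate

/-!
Write `a = M - c`, so `‖a‖ = L`, and `ζ = exp (2πi/n)`. The squared distance from `M` to the `k`-th
vertex is `‖a - R e^{iθ} ζ^k‖² = (L² + R²) + u ζ^k + v ζ^{-k}` with `u v = R² L²`. In the expansion
of its `m`-th power, summing over `k` kills every monomial `ζ^{k(i-j)}` with `i ≠ j`, because
`|i - j| ≤ m < n`; the surviving monomials see `u` and `v` only through `(u v)^i`. So the power sum
depends only on `L² + R²` and `R² L²`, which are symmetric in `R` and `L`.
-/

namespace IsPrimitiveRoot

variable {K : Type*} [Field K] {ζ : K} {n : ℕ}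

theorem geom_sum_zpow_eq_ite (hζ : IsPrimitiveRoot ζ n) (d : ℤ) :
    ∑ k ∈ range n, (ζ ^ d) ^ k = if (n : ℤ) ∣ d then (n : K) else 0 := by
  split_ifs with h
  · simp [(hζ.zpow_eq_one_iff_dvd d).mpr h]
  · have hne : ζ ^ d ≠ 1 := mt (hζ.zpow_eq_one_iff_dvd d).mp h
    rw [geom_sum_eq hne, ← zpow_natCast, ← zpow_mul, mul_comm, zpow_mul, hζ.zpow_eq_one,
      one_zpow, sub_self, zero_div]

theorem sum_pow_mul_add_mul_inv (hζ : IsPrimitiveRoot ζ n) {p : ℕ} (hp : p < n) (u v : K) :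
    ∑ k ∈ range n, (u * ζ ^ k + v * (ζ ^ k)⁻¹) ^ p
      = if Even p then n * p.choose (p / 2) * (u * v) ^ (p / 2) else 0 := by
  have hζ0 : ζ ≠ 0 := hζ.ne_zero (by omega)
  set d : ℕ → ℤ := fun i ↦ (i : ℤ) - (p - i : ℕ)
  have hterm : ∀ k i, (u * ζ ^ k) ^ i * (v * (ζ ^ k)⁻¹) ^ (p - i)
      = u ^ i * v ^ (p - i) * (ζ ^ d i) ^ k := by
    intro k i
    rw [← zpow_natCast (ζ ^ d i) k, ← zpow_mul, mul_comm (d i), zpow_mul, zpow_natCast]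
    simp only [d]
    rw [zpow_sub₀ (pow_ne_zero _ hζ0), zpow_natCast, zpow_natCast, div_eq_mul_inv, ← inv_pow]
    ring
  have hdvd : ∀ i ∈ range (p + 1), (n : ℤ) ∣ d i ↔ 2 * i = p := by
    intro i hi
    rw [mem_range] at hi
    constructor
    · intro h
      have h0 : d i = 0 := Int.eq_zero_of_dvd_of_natAbs_lt_natAbs h (by simp only [d]; omega)
      simp only [d] at h0
      omega
    · intro h
      simp only [d]
      rw [show (i : ℤ) - (p - i : ℕ) = 0 by omega]
      exact dvd_zero _
  calc ∑ k ∈ range n, (u * ζ ^ k + v * (ζ ^ k)⁻¹) ^ p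
      = ∑ i ∈ range (p + 1), u ^ i * v ^ (p - i) * p.choose i * ∑ k ∈ range n, (ζ ^ d i) ^ k := by
        simp_rw [add_pow, hterm, mul_sum]
        rw [sum_comm]
        refine sum_congr rfl fun i _ ↦ sum_congr rfl fun k _ ↦ ?_
        ring
    _ = ∑ i ∈ range (p + 1), if 2 * i = p then n * p.choose i * (u * v) ^ i else 0 := by
        refine sum_congr rfl fun i hi ↦ ?_
        rw [hζ.geom_sum_zpow_eq_ite, if_congr (hdvd i hi) rfl rfl]
        split_ifs with h
        · rw [← h, show 2 * i - i = i by omega, mul_pow]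
          ring
        · simp
    _ = _ := by
        rw [sum_eq_single (p / 2) (fun i _ hi ↦ if_neg (by omega)) (fun h ↦ absurd (mem_range.mpr (by omega)) h)]
        exact if_congr (by rw [Nat.even_iff]; omega) rfl rfl

theorem sum_pow_add_mul_add_mul_inv_congr (hζ : IsPrimitiveRoot ζ n) {m : ℕ} (hm : m < n)
    (x : K) {u v u' v' : K} (h : u * v = u' * v') :
    ∑ k ∈ range n, (x + u * ζ ^ k + v * (ζ ^ k)⁻¹) ^ m
      = ∑ k ∈ range n, (x + u' * ζ ^ k + v' * (ζ ^ k)⁻¹) ^ m := by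
  simp_rw [add_assoc x, add_pow x]
  rw [sum_comm, sum_comm (s := range n)]
  refine sum_congr rfl fun j _ ↦ ?_
  rw [← sum_mul, ← sum_mul, ← mul_sum, ← mul_sum, hζ.sum_pow_mul_add_mul_inv (by omega),
    hζ.sum_pow_mul_add_mul_inv (by omega), h]

end IsPrimitiveRoot

theorem exp_two_pi_mul_div_add_mul_I (n k : ℕ) (θ : ℝ) :
    exp (I * ((2 * π * k / n + θ : ℝ) : ℂ)) = exp (θ * I) * exp (2 * π * I / n) ^ k := by
  rw [← Complex.exp_nat_mul, ← Complex.exp_add]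
  congr 1
  push_cast
  ring

theorem ofReal_sq_norm_sub_mul_of_norm_eq_one (a w : ℂ) (ρ : ℝ) (hw : ‖w‖ = 1) :
    (‖a - ρ * w‖ : ℂ) ^ 2 = ‖a‖ ^ 2 + ρ ^ 2 - ρ * conj a * w - ρ * a * w⁻¹ := by
  have hw0 : w ≠ 0 := by rintro rfl; simp at hw
  rw [← mul_conj' (a - ρ * w), ← mul_conj' a, map_sub, map_mul, conj_ofReal, ← inv_eq_conj hw]
  field_simp
  ring

theorem ofReal_sq_norm_sub_vertex (n k : ℕ) (a : ℂ) (ρ θ : ℝ) :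
    (‖a - ρ * exp (I * ((2 * π * k / n + θ : ℝ) : ℂ))‖ : ℂ) ^ 2
      = ‖a‖ ^ 2 + ρ ^ 2 + (-ρ * conj a * exp (θ * I)) * exp (2 * π * I / n) ^ k
          + (-ρ * a * (exp (θ * I))⁻¹) * (exp (2 * π * I / n) ^ k)⁻¹ := by
  rw [exp_two_pi_mul_div_add_mul_I, ofReal_sq_norm_sub_mul_of_norm_eq_one]
  · ring
  · simp [norm_exp]

theorem neg_mul_conj_mul_mul_neg_mul_mul_inv (a e : ℂ) (ρ : ℝ) (he : e ≠ 0) :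
    (-ρ * conj a * e) * (-ρ * a * e⁻¹) = (ρ * ‖a‖ : ℂ) ^ 2 := by
  rw [mul_pow, ← mul_conj' a]
  field_simp

theorem power_sums_symmetric_in_R_L_general (n m : ℕ) (hm2 : m ≤ n - 1)
    (R L : ℝ)
    (c c' M M' : ℂ) (θ θ' : ℝ)
    (hMc : ‖M - c‖ = L) (hM'c' : ‖M' - c'‖ = R) :
    ∑ k ∈ Finset.range n,
        (‖M - (c + R * Complex.exp (Complex.I * ((2 * π * k / n + θ : ℝ) : ℂ)))‖) ^ (2 * m)
      = ∑ k ∈ Finset.range n,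
          (‖M' - (c' + L * Complex.exp (Complex.I * ((2 * π * k / n + θ' : ℝ) : ℂ)))‖) ^ (2 * m) := by
  rcases Nat.eq_zero_or_pos n with rfl | hn
  · simp
  apply ofReal_injective
  simp only [ofReal_sum, pow_mul, ofReal_pow, ← sub_sub, ofReal_sq_norm_sub_vertex, hMc, hM'c']
  rw [add_comm ((L : ℂ) ^ 2)]
  refine (isPrimitiveRoot_exp n hn.ne').sum_pow_add_mul_add_mul_inv_congr (by omega) _ ?_
  rw [neg_mul_conj_mul_mul_neg_mul_mul_inv _ _ _ (exp_ne_zero _),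
    neg_mul_conj_mul_mul_neg_mul_mul_inv _ _ _ (exp_ne_zero _), hMc, hM'c']
  ring

theorem power_sums_symmetric_in_R_L (n m : ℕ) (hn : 2 ≤ n) (hm1 : 1 ≤ m) (hm2 : m ≤ n - 1)
    (R L : ℝ) (hR : 0 ≤ R) (hL : 0 ≤ L)
    (c c' M M' : ℂ) (θ θ' : ℝ)
    (hMc : ‖M - c‖ = L) (hM'c' : ‖M' - c'‖ = R) :
    ∑ k ∈ Finset.range n,
        (‖M - (c + R * Complex.exp (Complex.I * ((2 * π * k / n + θ : ℝ) : ℂ)))‖) ^ (2 * m)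
      = ∑ k ∈ Finset.range n,
          (‖M' - (c' + L * Complex.exp (Complex.I * ((2 * π * k / n + θ' : ℝ) : ℂ)))‖) ^ (2 * m) :=
  power_sums_symmetric_in_R_L_general n m hm2 R L c c' M M' θ θ' hMc hM'c'
end

section
/- Let an equilateral triangle have vertices v_k = c + R·exp(I·(2πk/3 + θ)), k = 0,1,2, with R > 0, let M be a point with L = |M − c| and d_k = |M − v_k|. Then (d₀ + d₁ + d₂)(−d₀ + d₁ + d₂)(d₀ − d₁ + d₂)(d₀ + d₁ − d₂) = 3·(R² − L²)²; equivalently, the area Δ of the Pompeiu triangle with sides d₀, d₁, d₂ (given by Heron's formula) equals (√3/4)·|R² − L²|. -/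
open Complex Real Finset ComplexConjugate

/-! Put `z = M - c`, `w = R e^{iθ}` and `ζ = e^{2πi/3}`, so that `v_k = c + ζ^k w` and
`d_k² = A - 2 y_k` with `A = L² + R²` and `y_k = Re (ζ^k w z̄)`. Averaging over the cube
roots of unity gives `∑ y_k = 0` and `∑ y_k² = (3/2) R² L²`. Heron's product is
`(∑ d_k²)² - 2 ∑ d_k⁴`, a symmetric function of the `d_k²`, hence equals
`9A² - 2(3A² + 6R²L²) = 3(R² - L²)²`. -/

lemma heron_product_eq_of_sq_eq {a b c A P y₀ y₁ y₂ : ℝ} (ha : a ^ 2 = A - 2 * y₀)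
    (hb : b ^ 2 = A - 2 * y₁) (hc : c ^ 2 = A - 2 * y₂) (hy : y₀ + y₁ + y₂ = 0)
    (hy_sq : y₀ ^ 2 + y₁ ^ 2 + y₂ ^ 2 = 3 / 2 * P) :
    (a + b + c) * (-a + b + c) * (a - b + c) * (a + b - c) = 3 * A ^ 2 - 12 * P := by
  have heron : (a + b + c) * (-a + b + c) * (a - b + c) * (a + b - c)
      = (a ^ 2 + b ^ 2 + c ^ 2) ^ 2 - 2 * ((a ^ 2) ^ 2 + (b ^ 2) ^ 2 + (c ^ 2) ^ 2) := by
    ring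
  rw [heron, ha, hb, hc]
  linear_combination (4 * (y₀ + y₁ + y₂) - 4 * A) * hy - 8 * hy_sq

lemma Complex.re_sq_eq (v : ℂ) : v.re ^ 2 = (‖v‖ ^ 2 + (v ^ 2).re) / 2 := by
  rw [Complex.sq_norm, Complex.normSq_apply, sq v, Complex.mul_re]
  ring

namespace IsPrimitiveRoot

variable {ζ : ℂ} {n : ℕ}

lemma norm_sub_pow_mul_sq (hζ : IsPrimitiveRoot ζ n) (hn : n ≠ 0) (z w : ℂ) (k : ℕ) :
    ‖z - ζ ^ k * w‖ ^ 2 = ‖z‖ ^ 2 + ‖w‖ ^ 2 - 2 * (ζ ^ k * (w * conj z)).re := by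
  rw [norm_sub_rev, Complex.sq_norm, Complex.normSq_sub, ← Complex.sq_norm, ← Complex.sq_norm,
    norm_mul, norm_pow, hζ.norm'_eq_one hn, one_pow, one_mul, mul_assoc]
  ring

lemma sum_re_pow_mul (hζ : IsPrimitiveRoot ζ n) (hn : 1 < n) (u : ℂ) :
    ∑ k ∈ range n, (ζ ^ k * u).re = 0 := by
  rw [← Complex.re_sum, ← Finset.sum_mul, hζ.geom_sum_eq_zero hn, zero_mul, Complex.zero_re]

lemma sum_re_pow_mul_sq (hζ : IsPrimitiveRoot ζ n) (hn : 2 < n) (u : ℂ) :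
    ∑ k ∈ range n, (ζ ^ k * u).re ^ 2 = n / 2 * ‖u‖ ^ 2 := by
  have hζ2 : ζ ^ 2 ≠ 1 := hζ.pow_ne_one_of_pos_of_lt two_ne_zero hn
  have hgeom : ∑ k ∈ range n, (ζ ^ 2) ^ k = 0 := by
    rw [geom_sum_eq hζ2, ← pow_mul, mul_comm, pow_mul, hζ.pow_eq_one, one_pow, sub_self,
      zero_div]
  have hnorm (k : ℕ) : ‖ζ ^ k * u‖ = ‖u‖ := by
    rw [norm_mul, norm_pow, hζ.norm'_eq_one (by omega), one_pow, one_mul]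
  have hsq (k : ℕ) : (ζ ^ k * u) ^ 2 = (ζ ^ 2) ^ k * u ^ 2 := by ring
  simp only [Complex.re_sq_eq, hnorm, hsq, ← Finset.sum_div, Finset.sum_add_distrib,
    ← Complex.re_sum, ← Finset.sum_mul, hgeom, zero_mul, Complex.zero_re, add_zero,
    Finset.sum_const, Finset.card_range, nsmul_eq_mul]
  ring

end IsPrimitiveRoot

lemma equilateral_vertex_eq (c : ℂ) (R θ : ℝ) (k : ℕ) :
    c + R * Complex.exp (Complex.I * ((2 * π * k / 3 + θ : ℝ) : ℂ))
      = c + Complex.exp (2 * π * Complex.I / (3 : ℕ)) ^ k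
          * (R * Complex.exp (θ * Complex.I)) := by
  rw [← Complex.exp_nat_mul, mul_left_comm, ← Complex.exp_add]
  congr 3
  push_cast
  ring

theorem pompeiu_triangle_area (c M : ℂ) (R θ : ℝ) (hR : 0 < R)
    (L : ℝ) (hL : L = ‖M - c‖)
    (d : Fin 3 → ℝ)
    (hd : ∀ k : Fin 3,
      d k = ‖M - (c + R * Complex.exp (Complex.I * ((2 * π * (k : ℕ) / 3 + θ : ℝ) : ℂ)))‖) :
    (d 0 + d 1 + d 2) * (-d 0 + d 1 + d 2) * (d 0 - d 1 + d 2) * (d 0 + d 1 - d 2)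
        = 3 * (R ^ 2 - L ^ 2) ^ 2
      ∧ (1 / 4) * Real.sqrt
          ((d 0 + d 1 + d 2) * (-d 0 + d 1 + d 2) * (d 0 - d 1 + d 2) * (d 0 + d 1 - d 2))
        = (Real.sqrt 3 / 4) * |R ^ 2 - L ^ 2| := by
  set ζ := Complex.exp (2 * π * Complex.I / (3 : ℕ))
  set w := (R : ℂ) * Complex.exp (θ * Complex.I)
  set u := w * conj (M - c)
  have hζ : IsPrimitiveRoot ζ 3 := Complex.isPrimitiveRoot_exp 3 (by norm_num)
  have hw : ‖w‖ = R := by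
    rw [norm_mul, Complex.norm_exp_ofReal_mul_I, mul_one, Complex.norm_real,
      Real.norm_of_nonneg hR.le]
  have hd_sq (k : Fin 3) : d k ^ 2 = L ^ 2 + R ^ 2 - 2 * (ζ ^ (k : ℕ) * u).re := by
    rw [hd, equilateral_vertex_eq, sub_add_eq_sub_sub, hζ.norm_sub_pow_mul_sq three_ne_zero,
      hw, hL]
  have hsum := hζ.sum_re_pow_mul (by norm_num) u
  have hsum_sq := hζ.sum_re_pow_mul_sq (by norm_num) u
  simp only [Finset.sum_range_succ, Finset.sum_range_zero, zero_add, Nat.cast_ofNat]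
    at hsum hsum_sq
  have heron : (d 0 + d 1 + d 2) * (-d 0 + d 1 + d 2) * (d 0 - d 1 + d 2) * (d 0 + d 1 - d 2)
      = 3 * (R ^ 2 - L ^ 2) ^ 2 := by
    rw [heron_product_eq_of_sq_eq (hd_sq 0) (hd_sq 1) (hd_sq 2) hsum hsum_sq, norm_mul,
      Complex.norm_conj, hw, ← hL]
    ring
  refine ⟨heron, ?_⟩
  rw [heron, Real.sqrt_mul (by norm_num), Real.sqrt_sq_eq_abs]
  ring
end
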